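/- arXiv:1809.09987 — 5 statements merged into one kernel-verified Lean document; each statement's English description precedes it below -/
import Mathlib

section
/- Let d ≥ 1, ε > 0, let u : ℝᵈ → ℝ be twice continuously differentiable and l : ℝᵈ → ℝᵈ be continuously differentiable, and set b(x) = −(1/2)∇u(x) + l(x). Assume ⟨∇u(x), l(x)⟩ = 0 and div l(x) = 0 for every x ∈ ℝᵈ. Then the Gibbs density μ(x) = exp(−u(x)/ε) satisfies the stationary Fokker–Planck equation (ε/2)Δμ(x) − div(μ b)(x) = 0 for every x ∈ ℝᵈ. -/
open RealInnerProductSpace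

/-- The divergence of a vector field on `ℝᵈ`: the sum of the partial derivatives of the
coordinate functions. -/
noncomputable def ediv {d : ℕ} (v : EuclideanSpace ℝ (Fin d) → EuclideanSpace ℝ (Fin d))
    (x : EuclideanSpace ℝ (Fin d)) : ℝ :=
  ∑ i, fderiv ℝ v x (EuclideanSpace.single i 1) i

/-!
Write `μ = exp(−u/ε)`, so that `∇μ = −(μ/ε)∇u`. Then `(ε/2)Δμ = −(1/2) div(μ∇u)` cancels the
gradient part of `div(μ b) = −(1/2) div(μ∇u) + div(μ l)`, and the product rule gives
`div(μ l) = ⟨∇μ, l⟩ + μ div l = −(μ/ε)⟨∇u, l⟩ + μ div l = 0`.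
-/

section Gradient

variable {F : Type*} [NormedAddCommGroup F] [InnerProductSpace ℝ F] [CompleteSpace F]

lemma ContDiff.gradient {u : F → ℝ} {n : WithTop ℕ∞} (hu : ContDiff ℝ (n + 1) u) :
    ContDiff ℝ n (gradient u) :=
  (InnerProductSpace.toDual ℝ F).symm.toContinuousLinearEquiv.contDiff.comp
    (hu.fderiv_right le_rfl)

lemma hasGradientAt_exp_neg_div {u : F → ℝ} {x : F} (hu : DifferentiableAt ℝ u x) (ε : ℝ) :
    HasGradientAt (fun y => Real.exp (-u y / ε)) (-(Real.exp (-u x / ε) / ε) • gradient u x) x := by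
  have hexponent : HasFDerivAt (fun y => -u y / ε) (-ε⁻¹ • fderiv ℝ u x) x := by
    have : (fun y => -u y / ε) = fun y => -ε⁻¹ * u y := by
      funext y
      ring
    rw [this]
    exact hu.hasFDerivAt.const_mul _
  convert hexponent.exp.hasGradientAt using 1
  rw [smul_smul, map_smul, gradient]
  congr 1
  ring

end Gradient

section Divergence

variable {d : ℕ} {v w : EuclideanSpace ℝ (Fin d) → EuclideanSpace ℝ (Fin d)}
  {x : EuclideanSpace ℝ (Fin d)}

lemma ediv_add (hv : DifferentiableAt ℝ v x) (hw : DifferentiableAt ℝ w x) :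
    ediv (fun y => v y + w y) x = ediv v x + ediv w x := by
  simp only [ediv, fderiv_fun_add hv hw, _root_.add_apply, PiLp.add_apply,
    Finset.sum_add_distrib]

lemma ediv_const_smul (c : ℝ) (hv : DifferentiableAt ℝ v x) :
    ediv (fun y => c • v y) x = c * ediv v x := by
  simp only [ediv, fderiv_fun_const_smul hv, _root_.smul_apply, PiLp.smul_apply,
    smul_eq_mul, Finset.mul_sum]

lemma ediv_smul {f : EuclideanSpace ℝ (Fin d) → ℝ} (hf : DifferentiableAt ℝ f x)
    (hv : DifferentiableAt ℝ v x) :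
    ediv (fun y => f y • v y) x = ⟪gradient f x, v x⟫ + f x * ediv v x := by
  have hcoord : ∑ i, (v x) i * fderiv ℝ f x (EuclideanSpace.single i 1) = fderiv ℝ f x (v x) := by
    conv_rhs => rw [← (EuclideanSpace.basisFun (Fin d) ℝ).sum_repr (v x)]
    simp [map_sum]
  simp only [ediv, fderiv_fun_smul hf hv, _root_.add_apply,
    _root_.smul_apply, ContinuousLinearMap.smulRight_apply, PiLp.add_apply,
    PiLp.smul_apply, smul_eq_mul, Finset.sum_add_distrib, Finset.mul_sum, inner_gradient_left,
    ← hcoord]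
  rw [add_comm]
  congr 1
  all_goals exact Finset.sum_congr rfl fun i _ => by ring

end Divergence

theorem gibbs_stationary_fokker_planck_general (d : ℕ) (ε : ℝ) (hε : 0 < ε)
    (u : EuclideanSpace ℝ (Fin d) → ℝ) (hu : ContDiff ℝ 2 u)
    (l : EuclideanSpace ℝ (Fin d) → EuclideanSpace ℝ (Fin d)) (hl : ContDiff ℝ 1 l)
    (b : EuclideanSpace ℝ (Fin d) → EuclideanSpace ℝ (Fin d))
    (hb : ∀ x, b x = -(1/2 : ℝ) • gradient u x + l x)
    (horth : ∀ x, ⟪gradient u x, l x⟫ = 0)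
    (hdivfree : ∀ x, ediv l x = 0)
    (μ : EuclideanSpace ℝ (Fin d) → ℝ)
    (hμ : ∀ x, μ x = Real.exp (-u x / ε)) :
    ∀ x, (ε/2) * ediv (fun y => gradient μ y) x - ediv (fun y => μ y • b y) x = 0 := by
  intro x
  have hμ_eq : μ = fun y => Real.exp (-u y / ε) := funext hμ
  have hμ_grad (y : EuclideanSpace ℝ (Fin d)) :
      HasGradientAt μ (-(μ y / ε) • gradient u y) y := by
    rw [hμ y, hμ_eq]
    exact hasGradientAt_exp_neg_div (hu.differentiable two_ne_zero y) ε
  have hgradμ (y : EuclideanSpace ℝ (Fin d)) : gradient μ y = -(μ y / ε) • gradient u y :=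
    (hμ_grad y).gradient
  have hμ_x : DifferentiableAt ℝ μ x := (hμ_grad x).differentiableAt
  have hF : DifferentiableAt ℝ (fun y => μ y • gradient u y) x :=
    hμ_x.smul ((ContDiff.gradient (n := 1) hu).differentiable one_ne_zero x)
  have hl_x : DifferentiableAt ℝ l x := hl.differentiable one_ne_zero x
  have hlaplacian :
      ediv (fun y => gradient μ y) x = -ε⁻¹ * ediv (fun y => μ y • gradient u y) x := by
    have hfield : (fun y => gradient μ y) = fun y => -ε⁻¹ • (μ y • gradient u y) :=
      funext fun y => by rw [hgradμ, smul_smul, div_eq_inv_mul, neg_mul]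
    rw [hfield, ediv_const_smul _ hF]
  have hflux : ediv (fun y => μ y • b y) x =
      -(1 / 2) * ediv (fun y => μ y • gradient u y) x + ediv (fun y => μ y • l y) x := by
    simp_rw [hb, smul_add, smul_comm (μ _)]
    rw [ediv_add (hF.fun_const_smul _) (hμ_x.fun_smul hl_x), ediv_const_smul _ hF]
  have hμl : ediv (fun y => μ y • l y) x = 0 := by
    rw [ediv_smul hμ_x hl_x, hgradμ, inner_smul_left, horth, hdivfree]
    simp
  rw [hlaplacian, hflux, hμl]
  field_simp
  ring

/-- If `b = −(1/2)∇u + l` with `⟨∇u, l⟩ = 0` and `div l = 0` everywhere, then the Gibbs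
density `μ = exp(−u/ε)` satisfies the stationary Fokker–Planck equation
`(ε/2)Δμ − div(μ b) = 0`, where `Δμ = div(∇μ)`. -/
theorem gibbs_stationary_fokker_planck (d : ℕ) (hd : 1 ≤ d) (ε : ℝ) (hε : 0 < ε)
    (u : EuclideanSpace ℝ (Fin d) → ℝ) (hu : ContDiff ℝ 2 u)
    (l : EuclideanSpace ℝ (Fin d) → EuclideanSpace ℝ (Fin d)) (hl : ContDiff ℝ 1 l)
    (b : EuclideanSpace ℝ (Fin d) → EuclideanSpace ℝ (Fin d))
    (hb : ∀ x, b x = -(1/2 : ℝ) • gradient u x + l x)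
    (horth : ∀ x, ⟪gradient u x, l x⟫ = 0)
    (hdivfree : ∀ x, ediv l x = 0)
    (μ : EuclideanSpace ℝ (Fin d) → ℝ)
    (hμ : ∀ x, μ x = Real.exp (-u x / ε)) :
    ∀ x, (ε/2) * ediv (fun y => gradient μ y) x - ediv (fun y => μ y • b y) x = 0 :=
  gibbs_stationary_fokker_planck_general d ε hε u hu l hl b hb horth hdivfree μ hμ
end

section
/- Let J be a real d × d matrix all of whose complex eigenvalues have negative real part. Then there exists a unique real symmetric positive definite d × d matrix Q satisfying Q(J + Q) + (J + Q)ᵀ Q = 0, i.e., such that the matrix Q(J + Q) is antisymmetric. -/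
/-!
Substituting `P = Q⁻¹` turns the equation into the Lyapunov equation `J P + P Jᵀ = -2`, so it
suffices that `X ↦ J X + X Jᵀ` is injective and that its preimage `P` of `-2` is positive
definite. Both follow from the Cayley transform `C = M (1 + J)`, `M = (1 - J)⁻¹`. Since the
spectrum of `J` lies in the open left half-plane, that of `C` lies in the open unit disc, so
`Cᵏ → 0` by Gelfand's formula; and `C X Cᵀ = X + 2 M (J X + X Jᵀ) Mᵀ`. Hence a kernel element
satisfies `X = Cᵏ X (Cᵏ)ᵀ → 0`, while `P = C P Cᵀ + 4 M Mᵀ`, so along `vₖ = (Cᵀ)ᵏ v` the values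
`vₖᵀ P vₖ` decrease to `0`, each step by `4 ‖Mᵀ vₖ‖²`, which is positive for `k = 0`.
-/

open Filter Topology

theorem Complex.re_sub_one_div_add_one_nonneg {μ : ℂ} (hμ : 1 ≤ ‖μ‖) :
    0 ≤ ((μ - 1) / (μ + 1)).re := by
  have hsq : 1 ≤ μ.re * μ.re + μ.im * μ.im := by
    rw [← Complex.normSq_apply, Complex.normSq_eq_norm_sq]
    nlinarith
  rw [Complex.div_re, ← add_div]
  apply div_nonneg _ (Complex.normSq_nonneg _)
  simp only [Complex.sub_re, Complex.add_re, Complex.one_re, Complex.sub_im, Complex.add_im,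
    Complex.one_im]
  nlinarith

section CayleyTransform

variable {A : Type*} [Ring A] [Algebra ℂ A]

theorem isUnit_one_sub_of_forall_re_neg {a : A} (ha : ∀ z ∈ spectrum ℂ a, z.re < 0) :
    IsUnit (1 - a) := by
  simpa using spectrum.notMem_iff.mp fun h => (ha 1 h).not_ge zero_le_one

theorem norm_lt_one_of_mem_spectrum_of_one_sub_mul_eq {a c : A}
    (ha : ∀ z ∈ spectrum ℂ a, z.re < 0) (hc : (1 - a) * c = 1 + a) {μ : ℂ}
    (hμ : μ ∈ spectrum ℂ c) : ‖μ‖ < 1 := by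
  by_contra! h
  obtain ⟨u, hu⟩ := isUnit_one_sub_of_forall_re_neg ha
  refine hμ ((u.isUnit_units_mul _).mp ?_)
  have hexpand : (1 - a) * (algebraMap ℂ A μ - c) = (μ - 1) • 1 - (μ + 1) • a := by
    rw [mul_sub, hc, ← Algebra.commutes, Algebra.algebraMap_eq_smul_one, smul_mul_assoc]
    simp only [sub_smul, add_smul, one_smul, smul_sub, one_mul]
    abel
  rw [hu, hexpand]
  rcases eq_or_ne (μ + 1) 0 with hμ1 | hμ1
  · rw [hμ1, zero_smul, sub_zero, ← Algebra.algebraMap_eq_smul_one,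
      show μ - 1 = -2 by linear_combination hμ1]
    exact (isUnit_iff_ne_zero.mpr (by norm_num)).map _
  · have hunit := spectrum.notMem_iff.mp fun hmem =>
      (ha _ hmem).not_ge (Complex.re_sub_one_div_add_one_nonneg h)
    have hfactor : (μ - 1) • (1 : A) - (μ + 1) • a
        = algebraMap ℂ A (μ + 1) * (algebraMap ℂ A ((μ - 1) / (μ + 1)) - a) := by
      rw [← Algebra.smul_def, smul_sub, Algebra.algebraMap_eq_smul_one, smul_smul,
        mul_div_cancel₀ _ hμ1]
    rw [hfactor]
    exact ((isUnit_iff_ne_zero.mpr hμ1).map _).mul hunit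

end CayleyTransform

theorem tendsto_pow_nhds_zero_of_forall_mem_spectrum_norm_lt_one {A : Type*} [NormedRing A]
    [NormedAlgebra ℂ A] [CompleteSpace A] {a : A} (ha : ∀ z ∈ spectrum ℂ a, ‖z‖ < 1) :
    Tendsto (fun k : ℕ => a ^ k) atTop (𝓝 0) := by
  rcases subsingleton_or_nontrivial A with hA | hA
  · simpa only [Subsingleton.elim _ (0 : A)] using tendsto_const_nhds
  have hρ : spectralRadius ℂ a < 1 := by
    simpa using spectrum.spectralRadius_lt_of_forall_lt a (r := 1) fun z hz => by
      simpa [← NNReal.coe_lt_coe] using ha z hz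
  obtain ⟨r, hρr, hr1⟩ := ENNReal.lt_iff_exists_nnreal_btwn.mp hρ
  have hbound : ∀ᶠ k : ℕ in atTop, ‖a ^ k‖ ≤ (r : ℝ) ^ k := by
    filter_upwards [(spectrum.pow_nnnorm_pow_one_div_tendsto_nhds_spectralRadius a).eventually
      (gt_mem_nhds hρr), eventually_gt_atTop 0] with k hk hk0
    rw [one_div, ENNReal.rpow_inv_lt_iff (by positivity), ENNReal.rpow_natCast] at hk
    exact_mod_cast hk.le
  exact squeeze_zero_norm' hbound (tendsto_pow_atTop_nhds_zero_of_lt_one r.2 (mod_cast hr1))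

namespace Matrix

variable {n : Type*} [Fintype n] {R : Type*} [CommRing R]

def lyapunovMap (J : Matrix n n R) : Matrix n n R →ₗ[R] Matrix n n R :=
  LinearMap.mulLeft R J + LinearMap.mulRight R Jᵀ

@[simp]
theorem lyapunovMap_apply (J X : Matrix n n R) : lyapunovMap J X = J * X + X * Jᵀ := rfl

theorem lyapunovMap_transpose (J X : Matrix n n R) :
    lyapunovMap J Xᵀ = (lyapunovMap J X)ᵀ := by
  simp only [lyapunovMap_apply, transpose_add, transpose_mul, transpose_transpose, add_comm]

theorem dotProduct_mulVec_eq_of_eq_mul_mul_transpose_add {C P S : Matrix n n ℝ}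
    (hPS : P = C * P * Cᵀ + S) (u : n → ℝ) :
    u ⬝ᵥ (P *ᵥ u) = (Cᵀ *ᵥ u) ⬝ᵥ (P *ᵥ (Cᵀ *ᵥ u)) + u ⬝ᵥ (S *ᵥ u) := by
  conv_lhs => rw [hPS]
  rw [add_mulVec, dotProduct_add, ← mulVec_mulVec, ← mulVec_mulVec, dotProduct_mulVec,
    mulVec_transpose]

variable [DecidableEq n]

theorem mul_mul_transpose_eq_add_lyapunovMap {J M : Matrix n n R} (hM : M * (1 - J) = 1)
    (X : Matrix n n R) :
    M * (1 + J) * X * (M * (1 + J))ᵀ = X + (2 : R) • (M * lyapunovMap J X * Mᵀ) := by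
  have hX : X = M * (1 - J) * X * (M * (1 - J))ᵀ := by
    rw [hM, one_mul, transpose_one, mul_one]
  nth_rewrite 2 [hX]
  simp only [lyapunovMap_apply, transpose_mul, transpose_add, transpose_sub, transpose_one,
    two_smul]
  noncomm_ring

theorem eq_zero_of_mul_mul_transpose_eq [TopologicalSpace R] [IsTopologicalRing R] [T2Space R]
    {C X : Matrix n n R} (hC : Tendsto (fun k : ℕ => C ^ k) atTop (𝓝 0))
    (hX : C * X * Cᵀ = X) : X = 0 := by
  have hfix : ∀ k : ℕ, C ^ k * X * (C ^ k)ᵀ = X := by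
    intro k
    induction k with
    | zero => simp
    | succ k ih =>
      calc C ^ (k + 1) * X * (C ^ (k + 1))ᵀ = C * (C ^ k * X * (C ^ k)ᵀ) * Cᵀ := by
            rw [pow_succ', transpose_mul]
            simp only [mul_assoc]
        _ = X := by rw [ih, hX]
  have hcont : Continuous fun M : Matrix n n R => M * X * Mᵀ :=
    (continuous_id.matrix_mul continuous_const).matrix_mul continuous_id.matrix_transpose
  have hlim := (hcont.tendsto 0).comp hC
  simp only [Function.comp_def, hfix, zero_mul] at hlim
  exact tendsto_nhds_unique tendsto_const_nhds hlim

theorem posDef_of_eq_mul_mul_transpose_add {C P S : Matrix n n ℝ}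
    (hC : Tendsto (fun k : ℕ => C ^ k) atTop (𝓝 0)) (hP : P.IsHermitian) (hS : S.PosDef)
    (hPS : P = C * P * Cᵀ + S) : P.PosDef := by
  refine .of_dotProduct_mulVec_pos hP fun v hv => ?_
  let a : ℕ → ℝ := fun k => ((C ^ k)ᵀ *ᵥ v) ⬝ᵥ (P *ᵥ ((C ^ k)ᵀ *ᵥ v))
  have hstep : ∀ k, a k = a (k + 1) + ((C ^ k)ᵀ *ᵥ v) ⬝ᵥ (S *ᵥ ((C ^ k)ᵀ *ᵥ v)) := by
    intro k
    simp only [a, pow_succ, transpose_mul, ← mulVec_mulVec]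
    exact dotProduct_mulVec_eq_of_eq_mul_mul_transpose_add hPS _
  have hanti : Antitone a := antitone_nat_of_succ_le fun k => by
    have := hS.posSemidef.dotProduct_mulVec_nonneg ((C ^ k)ᵀ *ᵥ v)
    rw [star_trivial] at this
    linarith [hstep k]
  have hlim : Tendsto a atTop (𝓝 0) := by
    have hcont : Continuous fun M : Matrix n n ℝ => (Mᵀ *ᵥ v) ⬝ᵥ (P *ᵥ (Mᵀ *ᵥ v)) := by
      fun_prop
    have := (hcont.tendsto 0).comp hC
    simp only [transpose_zero, zero_mulVec, mulVec_zero, dotProduct_zero] at this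
    exact this
  have hv0 := hS.dotProduct_mulVec_pos hv
  have h0 := hstep 0
  simp only [a, pow_zero, transpose_one, one_mulVec] at h0
  rw [star_trivial] at hv0 ⊢
  linarith [hanti.le_of_tendsto hlim 1]

theorem mul_add_add_transpose_mul_eq_zero_iff {J Q : Matrix n n R} (hQs : Q.IsSymm)
    (hQ : IsUnit Q.det) :
    Q * (J + Q) + (J + Q)ᵀ * Q = 0 ↔ lyapunovMap J Q⁻¹ = (-2 : R) • 1 := by
  have key : Q * (J + Q) + (J + Q)ᵀ * Q = Q * (lyapunovMap J Q⁻¹ + (2 : R) • 1) * Q := by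
    rw [lyapunovMap_apply, transpose_add, hQs.eq]
    simp only [mul_add, add_mul, mul_assoc, nonsing_inv_mul _ hQ,
      mul_nonsing_inv_cancel_left _ _ hQ, mul_one, two_smul]
    abel
  have hQu : IsUnit Q := (isUnit_iff_isUnit_det Q).mpr hQ
  rw [key, hQu.mul_left_eq_zero, hQu.mul_right_eq_zero, add_eq_zero_iff_eq_neg, ← neg_smul]

noncomputable def cayleyTransform (J : Matrix n n ℝ) : Matrix n n ℝ := (1 - J)⁻¹ * (1 + J)

theorem isUnit_det_one_sub_of_forall_re_neg {J : Matrix n n ℝ}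
    (hJ : ∀ μ ∈ spectrum ℂ (J.map Complex.ofReal), μ.re < 0) : IsUnit (1 - J).det := by
  have h := (isUnit_iff_isUnit_det _).mp (isUnit_one_sub_of_forall_re_neg hJ)
  rw [show 1 - J.map Complex.ofReal = (algebraMap ℝ ℂ).mapMatrix (1 - J) by
    rw [map_sub, map_one]; rfl, ← RingHom.map_det] at h
  exact isUnit_iff_ne_zero.mpr fun h0 => by simp [h0] at h

attribute [local instance] Matrix.linftyOpNormedRing Matrix.linftyOpNormedAlgebra in
theorem tendsto_pow_cayleyTransform {J : Matrix n n ℝ}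
    (hJ : ∀ μ ∈ spectrum ℂ (J.map Complex.ofReal), μ.re < 0) :
    Tendsto (fun k : ℕ => cayleyTransform J ^ k) atTop (𝓝 0) := by
  set f := (algebraMap ℝ ℂ).mapMatrix (m := n)
  have hc : (1 - f J) * f (cayleyTransform J) = 1 + f J := by
    rw [← map_one f, ← map_sub, ← map_add, ← map_mul, cayleyTransform,
      mul_nonsing_inv_cancel_left _ _ (isUnit_det_one_sub_of_forall_re_neg hJ)]
  have hpow := tendsto_pow_nhds_zero_of_forall_mem_spectrum_norm_lt_one fun μ =>
    norm_lt_one_of_mem_spectrum_of_one_sub_mul_eq hJ hc (μ := μ)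
  have hre : Continuous fun M : Matrix n n ℂ => M.map Complex.re :=
    continuous_id.matrix_map Complex.continuous_re
  have hback : ∀ k : ℕ, (f (cayleyTransform J) ^ k).map Complex.re = cayleyTransform J ^ k := by
    intro k
    rw [← map_pow]
    ext i j
    simp [f, RingHom.mapMatrix_apply]
  simpa only [Function.comp_def, hback, Matrix.map_zero _ Complex.zero_re]
    using (hre.tendsto 0).comp hpow

theorem lyapunovMap_injective {J : Matrix n n ℝ}
    (hJ : ∀ μ ∈ spectrum ℂ (J.map Complex.ofReal), μ.re < 0) :
    Function.Injective (lyapunovMap J) := by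
  have hM := nonsing_inv_mul _ (isUnit_det_one_sub_of_forall_re_neg hJ)
  refine (injective_iff_map_eq_zero _).mpr fun X hX =>
    eq_zero_of_mul_mul_transpose_eq (tendsto_pow_cayleyTransform hJ) ?_
  rw [cayleyTransform, mul_mul_transpose_eq_add_lyapunovMap hM, hX, mul_zero, zero_mul,
    smul_zero, add_zero]

theorem exists_posDef_lyapunovMap_eq {J : Matrix n n ℝ}
    (hJ : ∀ μ ∈ spectrum ℂ (J.map Complex.ofReal), μ.re < 0) :
    ∃ P : Matrix n n ℝ, lyapunovMap J P = (-2 : ℝ) • 1 ∧ P.PosDef := by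
  have hinj := lyapunovMap_injective hJ
  obtain ⟨P, hP⟩ := LinearMap.injective_iff_surjective.mp hinj ((-2 : ℝ) • 1)
  have hsymm : Pᵀ = P :=
    hinj (by rw [lyapunovMap_transpose, hP, transpose_smul, transpose_one])
  have hdet := isUnit_det_one_sub_of_forall_re_neg hJ
  have hS : ((4 : ℝ) • ((1 - J)⁻¹ * (1 - J)⁻¹ᵀ)).PosDef := by
    have hinv : IsUnit (1 - J)⁻¹ :=
      (isUnit_iff_isUnit_det _).mpr (isUnit_nonsing_inv_det _ hdet)
    simpa using (PosDef.mul_conjTranspose_self _ (vecMul_injective_iff_isUnit.mpr hinv)).smul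
      (four_pos (α := ℝ))
  refine ⟨P, hP, posDef_of_eq_mul_mul_transpose_add (tendsto_pow_cayleyTransform hJ)
    (isHermitian_iff_isSymm.mpr hsymm) hS ?_⟩
  rw [cayleyTransform, mul_mul_transpose_eq_add_lyapunovMap (nonsing_inv_mul _ hdet), hP]
  simp only [Matrix.mul_smul, Matrix.smul_mul, mul_one, smul_smul]
  module

end Matrix

open Matrix

/-- If all complex eigenvalues of the real matrix `J` have negative real part, then there is
a unique symmetric positive definite matrix `Q` such that `Q(J + Q)` is antisymmetric,
i.e. `Q(J + Q) + (J + Q)ᵀ Q = 0`. -/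
theorem quasipotential_matrix_exists_unique (d : ℕ) (J : Matrix (Fin d) (Fin d) ℝ)
    (hJ : ∀ μ ∈ spectrum ℂ (J.map (Complex.ofReal)), μ.re < 0) :
    ∃! Q : Matrix (Fin d) (Fin d) ℝ,
      Q.IsSymm ∧ Q.PosDef ∧ Q * (J + Q) + (J + Q)ᵀ * Q = 0 := by
  obtain ⟨P, hLP, hP⟩ := exists_posDef_lyapunovMap_eq hJ
  have hPdet : IsUnit P.det := (isUnit_iff_isUnit_det P).mp hP.isUnit
  have hPinv : P⁻¹.IsSymm := isHermitian_iff_isSymm.mp hP.inv.isHermitian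
  refine ⟨P⁻¹, ⟨hPinv, hP.inv, ?_⟩, ?_⟩
  · rw [mul_add_add_transpose_mul_eq_zero_iff hPinv (isUnit_nonsing_inv_det P hPdet),
      nonsing_inv_nonsing_inv P hPdet, hLP]
  · rintro Q ⟨hQs, hQ, hQeq⟩
    have hQdet : IsUnit Q.det := (isUnit_iff_isUnit_det Q).mp hQ.isUnit
    rw [mul_add_add_transpose_mul_eq_zero_iff hQs hQdet, ← hLP] at hQeq
    rw [← lyapunovMap_injective hJ hQeq, nonsing_inv_nonsing_inv Q hQdet]
end

section
/- Let σ > 0, β > 0, ρ > 0 and let b be the Lorenz vector field with these parameters. Then every solution of the Lorenz system remains in a bounded region: if x : [0, ∞) → ℝ³ is differentiable with x'(t) = b(x(t)) for all t ≥ 0, then sup_{t ≥ 0} ‖x(t)‖ < ∞. -/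
/-!
The shifted quadratic form `V = ρ x₁² + σ x₂² + σ (x₃ - 2ρ)²` is a Lyapunov function: along a
solution the cubic terms `x₁ x₂ x₃` cancel in `V'`, leaving `V' ≤ 4σβρ² - c V` with
`c = min (min 2 (2σ)) β > 0`. Grönwall's inequality then keeps `V` below `max (V 0) (4σβρ² / c)`,
and `V` dominates `‖x‖²` up to constants.
-/

open Real

theorem le_max_of_hasDerivAt_le_sub_mul {f f' : ℝ → ℝ} {c K : ℝ} (hc : 0 < c)
    (hf : ∀ t, 0 ≤ t → HasDerivAt f (f' t) t) (bound : ∀ t, 0 ≤ t → f' t ≤ K - c * f t)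
    {t : ℝ} (ht : 0 ≤ t) : f t ≤ max (f 0) (K / c) := by
  have hgronwall := le_gronwallBound_of_liminf_deriv_right_le (δ := f 0) (K := -c) (ε := K)
    (fun s hs => (hf s hs.1).continuousAt.continuousWithinAt)
    (fun s hs _ hr => (hf s hs.1).hasDerivWithinAt.liminf_right_slope_le hr) le_rfl
    (fun s hs => by linarith [bound s hs.1]) t ⟨ht, le_rfl⟩
  rw [sub_zero, gronwallBound_of_K_ne_0 (neg_ne_zero.2 hc.ne')] at hgronwall
  have he₀ : 0 ≤ exp (-c * t) := (exp_pos _).le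
  have he₁ : exp (-c * t) ≤ 1 := exp_le_one_iff.2 (by nlinarith)
  calc f t ≤ f 0 * exp (-c * t) + K / c * (1 - exp (-c * t)) := by
        convert hgronwall using 2; field_simp; ring
    _ ≤ max (f 0) (K / c) * exp (-c * t) + max (f 0) (K / c) * (1 - exp (-c * t)) := by
        gcongr
        exacts [le_max_left _ _, le_max_right _ _]
    _ = max (f 0) (K / c) := by ring

namespace Lorenz

variable (σ ρ : ℝ)

def lyapunov (p : EuclideanSpace ℝ (Fin 3)) : ℝ :=
  ρ * p 0 ^ 2 + σ * p 1 ^ 2 + σ * (p 2 - 2 * ρ) ^ 2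

variable {σ ρ}

theorem hasDerivAt_lyapunov_comp {γ : ℝ → EuclideanSpace ℝ (Fin 3)} {v : EuclideanSpace ℝ (Fin 3)}
    {t : ℝ} (hγ : HasDerivAt γ v t) :
    HasDerivAt (fun s => lyapunov σ ρ (γ s))
      (2 * (ρ * γ t 0 * v 0 + σ * γ t 1 * v 1 + σ * (γ t 2 - 2 * ρ) * v 2)) t := by
  have coord (i : Fin 3) : HasDerivAt (fun s => γ s i) (v i) t := by
    simpa [Function.comp_def] using (EuclideanSpace.proj i).hasFDerivAt.comp_hasDerivAt t hγ
  exact ((((coord 0).pow 2).const_mul ρ).add (((coord 1).pow 2).const_mul σ)).add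
    ((((coord 2).sub_const (2 * ρ)).pow 2).const_mul σ) |>.congr_deriv (by ring)

theorem lyapunov_orbital_deriv_le {β c : ℝ} (hσ : 0 ≤ σ) (hβ : 0 ≤ β) (hρ : 0 ≤ ρ)
    (hc₁ : c ≤ 2 * σ) (hc₂ : c ≤ 2) (hc₃ : c ≤ β) (p v : EuclideanSpace ℝ (Fin 3))
    (hv : v 0 = σ * (p 1 - p 0) ∧ v 1 = p 0 * (ρ - p 2) - p 1 ∧ v 2 = p 0 * p 1 - β * p 2) :
    2 * (ρ * p 0 * v 0 + σ * p 1 * v 1 + σ * (p 2 - 2 * ρ) * v 2) ≤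
      4 * σ * β * ρ ^ 2 - c * lyapunov σ ρ p := by
  obtain ⟨hv₀, hv₁, hv₂⟩ := hv
  rw [hv₀, hv₁, hv₂, lyapunov]
  nlinarith [mul_nonneg (mul_nonneg hρ (sub_nonneg.2 hc₁)) (sq_nonneg (p 0)),
    mul_nonneg (mul_nonneg hσ (sub_nonneg.2 hc₂)) (sq_nonneg (p 1)),
    mul_nonneg (mul_nonneg hσ (sub_nonneg.2 hc₃)) (sq_nonneg (p 2 - 2 * ρ)),
    mul_nonneg (mul_nonneg hσ hβ) (sq_nonneg (p 2))]

theorem norm_sq_le_lyapunov (hσ : 0 < σ) (hρ : 0 < ρ) (p : EuclideanSpace ℝ (Fin 3)) :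
    ‖p‖ ^ 2 ≤ (1 / ρ + 2 / σ) * lyapunov σ ρ p + 8 * ρ ^ 2 := by
  have expand : (1 / ρ + 2 / σ) * lyapunov σ ρ p = p 0 ^ 2 + 2 * p 1 ^ 2 + 2 * (p 2 - 2 * ρ) ^ 2
      + σ / ρ * (p 1 ^ 2 + (p 2 - 2 * ρ) ^ 2) + 2 * ρ / σ * p 0 ^ 2 := by
    rw [lyapunov]; field_simp; ring
  rw [EuclideanSpace.real_norm_sq_eq, Fin.sum_univ_three, expand]
  have hcross : 0 ≤ σ / ρ * (p 1 ^ 2 + (p 2 - 2 * ρ) ^ 2) + 2 * ρ / σ * p 0 ^ 2 := by positivity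
  nlinarith [sq_nonneg (p 2 - 4 * ρ)]

end Lorenz

open Lorenz in
/-- For `σ, β, ρ > 0`, every solution of the Lorenz system remains in a bounded region. -/
theorem lorenz_solutions_bounded (σ β ρ : ℝ) (hσ : 0 < σ) (hβ : 0 < β) (hρ : 0 < ρ)
    (b : EuclideanSpace ℝ (Fin 3) → EuclideanSpace ℝ (Fin 3))
    (hb : ∀ x : EuclideanSpace ℝ (Fin 3),
      b x 0 = σ * (x 1 - x 0) ∧
      b x 1 = x 0 * (ρ - x 2) - x 1 ∧
      b x 2 = x 0 * x 1 - β * x 2)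
    (x : ℝ → EuclideanSpace ℝ (Fin 3))
    (hode : ∀ t : ℝ, 0 ≤ t → HasDerivAt x (b (x t)) t) :
    ∃ M : ℝ, ∀ t : ℝ, 0 ≤ t → ‖x t‖ ≤ M := by
  set c := min (min 2 (2 * σ)) β
  have hc : 0 < c := lt_min (lt_min two_pos (by positivity)) hβ
  set V₀ := max (lyapunov σ ρ (x 0)) (4 * σ * β * ρ ^ 2 / c)
  have hV (t : ℝ) (ht : 0 ≤ t) : lyapunov σ ρ (x t) ≤ V₀ :=
    le_max_of_hasDerivAt_le_sub_mul hc (fun s hs => hasDerivAt_lyapunov_comp (hode s hs))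
      (fun s _ => lyapunov_orbital_deriv_le hσ.le hβ.le hρ.le
        (min_le_of_left_le (min_le_right _ _)) (min_le_of_left_le (min_le_left _ _))
        (min_le_right _ _) _ _ (hb (x s))) ht
  refine ⟨√((1 / ρ + 2 / σ) * V₀ + 8 * ρ ^ 2), fun t ht => ?_⟩
  refine Real.le_sqrt_of_sq_le ((norm_sq_le_lyapunov hσ hρ (x t)).trans ?_)
  gcongr
  exact hV t ht
end

section
/- Let σ > 0, β > 0 and 0 < ρ < 1, and let b be the Lorenz vector field with these parameters. Then the origin is globally attracting: if x : [0, ∞) → ℝ³ is differentiable with x'(t) = b(x(t)) for all t ≥ 0, then x(t) → (0, 0, 0) as t → ∞. -/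
/-!
With the weighted energy `V = x₀² / σ + x₁² + x₂²`, the cubic terms of the Lorenz field cancel
along a solution and `V' = -2 x₀² + 2 (1 + ρ) x₀ x₁ - 2 x₁² - 2 β x₂²`, a negative definite
quadratic form when `-1 ≤ ρ < 1`. Hence `V' ≤ -c V` for some `c > 0`, and Grönwall's inequality
gives `V(x(t)) ≤ V(x(0)) e^{-ct} → 0`.
-/

open Filter Topology Real

theorem le_mul_exp_of_hasDerivAt_le_mul {f f' : ℝ → ℝ} {K a : ℝ}
    (hf : ∀ t, a ≤ t → HasDerivAt f (f' t) t) (hbound : ∀ t, a ≤ t → f' t ≤ K * f t)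
    {t : ℝ} (ht : a ≤ t) : f t ≤ f a * exp (K * (t - a)) := by
  rw [← gronwallBound_ε0]
  refine le_gronwallBound_of_liminf_deriv_right_le (f' := f') (b := t) ?_ ?_ le_rfl ?_ t
    ⟨ht, le_rfl⟩
  · exact fun s hs => (hf s hs.1).continuousAt.continuousWithinAt
  · intro s hs r hr
    simpa [slope, smul_eq_mul] using (hf s hs.1).hasDerivWithinAt.liminf_right_slope_le hr
  · simpa using fun s hs _ => hbound s hs

theorem tendsto_zero_of_hasDerivAt_le_neg_mul {f f' : ℝ → ℝ} {c : ℝ} (hc : 0 < c)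
    (hf : ∀ t, 0 ≤ t → HasDerivAt f (f' t) t) (hbound : ∀ t, 0 ≤ t → f' t ≤ -c * f t)
    (hnonneg : ∀ t, 0 ≤ t → 0 ≤ f t) : Tendsto f atTop (𝓝 0) := by
  have hdecay : Tendsto (fun t => f 0 * exp (-c * (t - 0))) atTop (𝓝 0) := by
    simpa using ((tendsto_exp_atBot.comp
      (tendsto_neg_atTop_atBot.const_mul_atBot hc)).const_mul (f 0))
  exact squeeze_zero' (eventually_ge_atTop 0 |>.mono hnonneg)
    (eventually_ge_atTop 0 |>.mono fun t ht => le_mul_exp_of_hasDerivAt_le_mul hf hbound ht) hdecay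

noncomputable def lorenzEnergy (σ : ℝ) (y : EuclideanSpace ℝ (Fin 3)) : ℝ :=
  y 0 ^ 2 / σ + y 1 ^ 2 + y 2 ^ 2

theorem lorenzEnergy_nonneg {σ : ℝ} (hσ : 0 ≤ σ) (y : EuclideanSpace ℝ (Fin 3)) :
    0 ≤ lorenzEnergy σ y := by
  unfold lorenzEnergy; positivity

theorem norm_sq_le_mul_lorenzEnergy {σ : ℝ} (hσ : 0 < σ) (y : EuclideanSpace ℝ (Fin 3)) :
    ‖y‖ ^ 2 ≤ (σ + 1) * lorenzEnergy σ y := by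
  have hy₀ : y 0 ^ 2 = σ * (y 0 ^ 2 / σ) := by field_simp
  have hy₀' : 0 ≤ y 0 ^ 2 / σ := by positivity
  rw [EuclideanSpace.norm_sq_eq, Fin.sum_univ_three, lorenzEnergy]
  simp only [Real.norm_eq_abs, sq_abs]
  nlinarith [sq_nonneg (y 1), sq_nonneg (y 2)]

theorem tendsto_zero_of_tendsto_lorenzEnergy {α : Type*} {l : Filter α} {σ : ℝ} (hσ : 0 < σ)
    {x : α → EuclideanSpace ℝ (Fin 3)} (h : Tendsto (fun a => lorenzEnergy σ (x a)) l (𝓝 0)) :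
    Tendsto x l (𝓝 0) := by
  rw [tendsto_zero_iff_norm_tendsto_zero]
  have hsqrt : Tendsto (fun a => √((σ + 1) * lorenzEnergy σ (x a))) l (𝓝 0) := by
    simpa using (h.const_mul (σ + 1)).sqrt
  refine squeeze_zero (fun _ => norm_nonneg _) (fun a => ?_) hsqrt
  simpa using abs_le_sqrt (norm_sq_le_mul_lorenzEnergy hσ (x a))

theorem hasDerivAt_lorenzEnergy {σ t : ℝ} {x : ℝ → EuclideanSpace ℝ (Fin 3)}
    {v : EuclideanSpace ℝ (Fin 3)} (hx : HasDerivAt x v t) :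
    HasDerivAt (fun s => lorenzEnergy σ (x s))
      (2 * (x t 0 * v 0 / σ + x t 1 * v 1 + x t 2 * v 2)) t := by
  have hcoord (i : Fin 3) : HasDerivAt (fun s => x s i) (v i) t :=
    (EuclideanSpace.proj i : EuclideanSpace ℝ (Fin 3) →L[ℝ] ℝ).hasFDerivAt.comp_hasDerivAt t hx
  unfold lorenzEnergy
  refine ((((hcoord 0).fun_pow 2).div_const σ).fun_add ((hcoord 1).fun_pow 2)
    |>.fun_add ((hcoord 2).fun_pow 2)).congr_deriv ?_
  norm_num; ring

theorem lorenzEnergy_deriv_le_neg_mul {σ β ρ c : ℝ} (hσ : 0 < σ) (hρ : -1 ≤ ρ)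
    (hc₁ : c ≤ 1 - ρ) (hcσ : c ≤ (1 - ρ) * σ) (hcβ : c ≤ 2 * β)
    (y v : EuclideanSpace ℝ (Fin 3))
    (hv₀ : v 0 = σ * (y 1 - y 0)) (hv₁ : v 1 = y 0 * (ρ - y 2) - y 1)
    (hv₂ : v 2 = y 0 * y 1 - β * y 2) :
    2 * (y 0 * v 0 / σ + y 1 * v 1 + y 2 * v 2) ≤ -c * lorenzEnergy σ y := by
  have h₀ : c * (y 0 ^ 2 / σ) ≤ (1 - ρ) * y 0 ^ 2 := by
    rw [mul_div_assoc', div_le_iff₀ hσ]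
    nlinarith [sq_nonneg (y 0)]
  have h₁ : c * y 1 ^ 2 ≤ (1 - ρ) * y 1 ^ 2 := by nlinarith [sq_nonneg (y 1)]
  have h₂ : c * y 2 ^ 2 ≤ 2 * β * y 2 ^ 2 := by nlinarith [sq_nonneg (y 2)]
  have hv : y 0 * v 0 / σ = y 0 * (y 1 - y 0) := by rw [hv₀]; field_simp
  rw [lorenzEnergy, hv, hv₁, hv₂]
  nlinarith [mul_nonneg (by linarith : (0 : ℝ) ≤ 1 + ρ) (sq_nonneg (y 0 - y 1))]

/-- For `σ, β > 0` and `0 < ρ < 1`, the origin is a globally attracting equilibrium of the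
Lorenz system: every solution converges to the origin as `t → ∞`. -/
theorem lorenz_origin_globally_attracting (σ β ρ : ℝ)
    (hσ : 0 < σ) (hβ : 0 < β) (hρ0 : 0 < ρ) (hρ1 : ρ < 1)
    (b : EuclideanSpace ℝ (Fin 3) → EuclideanSpace ℝ (Fin 3))
    (hb : ∀ x : EuclideanSpace ℝ (Fin 3),
      b x 0 = σ * (x 1 - x 0) ∧
      b x 1 = x 0 * (ρ - x 2) - x 1 ∧
      b x 2 = x 0 * x 1 - β * x 2)
    (x : ℝ → EuclideanSpace ℝ (Fin 3))
    (hode : ∀ t : ℝ, 0 ≤ t → HasDerivAt x (b (x t)) t) :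
    Filter.Tendsto x Filter.atTop (nhds 0) := by
  set c := min (min (1 - ρ) ((1 - ρ) * σ)) (2 * β)
  have hc : 0 < c := lt_min (lt_min (by linarith) (mul_pos (by linarith) hσ)) (by linarith)
  refine tendsto_zero_of_tendsto_lorenzEnergy hσ <|
    tendsto_zero_of_hasDerivAt_le_neg_mul hc (fun t ht => hasDerivAt_lorenzEnergy (hode t ht))
      (fun t _ => ?_) (fun t _ => lorenzEnergy_nonneg hσ.le (x t))
  obtain ⟨hb₀, hb₁, hb₂⟩ := hb (x t)
  exact lorenzEnergy_deriv_le_neg_mul hσ (by linarith) ((min_le_left _ _).trans (min_le_left _ _))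
    ((min_le_left _ _).trans (min_le_right _ _)) (min_le_right _ _) (x t) (b (x t)) hb₀ hb₁ hb₂
end

section
/- Let σ = 10, β = 8/3 and ρ > 1, and let A be the Jacobian matrix of the Lorenz vector field with parameters σ, β, ρ evaluated at the equilibrium C₊ = (√(β(ρ−1)), √(β(ρ−1)), ρ−1). Then every complex eigenvalue of A has negative real part if and only if ρ < 470/19 (≈ 24.74). In other words, the equilibria C₊ and C₋ are linearly asymptotically stable exactly for 1 < ρ < ρ₂ = 470/19, and lose stability at the subcritical Hopf bifurcation value ρ₂. -/
/-!
The characteristic polynomial of the Jacobian at `C₊` is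
`μ³ + (σ + β + 1) μ² + β (σ + ρ) μ + 2 σ β (ρ - 1)`. A real monic cubic `μ³ + a μ² + b μ + c`
with `a, c > 0` has a negative real root `r`; splitting it off leaves `μ² + s μ + t` with `t > 0`
and `a b - c = s (t - a r)`, `t - a r > 0`. So all roots lie in the open left half-plane iff
`s > 0` iff `c < a b` (Routh–Hurwitz), which for `σ = 10`, `β = 8/3` reads `ρ < 470/19`.
-/

open Complex

lemma re_neg_of_sq_add_mul_add_eq_zero {s t : ℝ} (hs : 0 < s) (ht : 0 < t) {μ : ℂ}
    (h : μ ^ 2 + s * μ + t = 0) : μ.re < 0 := by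
  have hre : μ.re ^ 2 - μ.im ^ 2 + s * μ.re + t = 0 := by
    simpa [sq] using congrArg re h
  have him : μ.im * (2 * μ.re + s) = 0 := by
    have := congrArg im h
    simp only [add_im, mul_im, ofReal_re, ofReal_im, sq, zero_im] at this
    linear_combination this
  rcases mul_eq_zero.mp him with him0 | hsum
  · rw [him0] at hre
    nlinarith
  · linarith

lemma exists_sq_add_mul_add_eq_zero_re_nonneg {s : ℝ} (hs : s ≤ 0) (t : ℂ) :
    ∃ μ : ℂ, μ ^ 2 + s * μ + t = 0 ∧ 0 ≤ μ.re := by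
  obtain ⟨ν, hν⟩ := exists_quadratic_eq_zero (one_ne_zero : (1 : ℂ) ≠ 0) (b := (s : ℂ)) (c := t)
    (IsAlgClosed.exists_eq_mul_self _)
  have hν' : ν ^ 2 + s * ν + t = 0 := by linear_combination hν
  -- the two roots `ν` and `-s - ν` have real parts summing to `-s ≥ 0`
  by_cases hre : 0 ≤ ν.re
  · exact ⟨ν, hν', hre⟩
  · refine ⟨-s - ν, by linear_combination hν', ?_⟩
    simp only [sub_re, neg_re, ofReal_re]
    linarith

lemma exists_neg_root_of_cubic (a b : ℝ) {c : ℝ} (hc : 0 < c) :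
    ∃ r < 0, r ^ 3 + a * r ^ 2 + b * r + c = 0 := by
  set K := 1 + |a| + |b| + c
  have hK : 1 ≤ K := by linarith [abs_nonneg a, abs_nonneg b]
  have hfK : (-K) ^ 3 + a * (-K) ^ 2 + b * (-K) + c < 0 := by
    nlinarith [le_abs_self a, neg_abs_le b, abs_nonneg a, abs_nonneg b,
      mul_le_mul_of_nonneg_left hK (abs_nonneg b)]
  obtain ⟨r, ⟨-, hr0⟩, hr⟩ := intermediate_value_Icc (by linarith : -K ≤ 0)
    (f := fun x : ℝ => x ^ 3 + a * x ^ 2 + b * x + c) (by fun_prop) ⟨hfK.le, by simp [hc.le]⟩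
  refine ⟨r, lt_of_le_of_ne hr0 ?_, hr⟩
  rintro rfl
  linarith

lemma cubic_eq_mul_of_root {R : Type*} [CommRing R] {a b c r : R}
    (hr : r ^ 3 + a * r ^ 2 + b * r + c = 0) (x : R) :
    x ^ 3 + a * x ^ 2 + b * x + c = (x - r) * (x ^ 2 + (a + r) * x + (b + r * (a + r))) := by
  linear_combination hr

theorem cubic_routh_hurwitz {a b c : ℝ} (ha : 0 < a) (hc : 0 < c) :
    (∀ μ : ℂ, μ ^ 3 + a * μ ^ 2 + b * μ + c = 0 → μ.re < 0) ↔ c < a * b := by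
  obtain ⟨r, hr0, hr⟩ := exists_neg_root_of_cubic a b hc
  set s := a + r
  set t := b + r * s
  have hfactor (μ : ℂ) : μ ^ 3 + a * μ ^ 2 + b * μ + c = (μ - r) * (μ ^ 2 + s * μ + t) := by
    push_cast [s, t]
    exact cubic_eq_mul_of_root (by exact_mod_cast hr) μ
  have ht : 0 < t := by nlinarith
  have hcrit : c < a * b ↔ 0 < s := by
    have : a * b - c = s * (t - a * r) := by simp only [s, t]; linear_combination -hr
    have : 0 < t - a * r := by nlinarith
    constructor <;> intro h <;> nlinarith
  rw [hcrit]
  constructor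
  · intro hstable
    by_contra! hs
    obtain ⟨μ, hμ, hμre⟩ := exists_sq_add_mul_add_eq_zero_re_nonneg hs t
    exact (hstable μ (by rw [hfactor, hμ, mul_zero])).not_ge hμre
  · intro hs μ hμ
    rcases mul_eq_zero.mp ((hfactor μ).symm.trans hμ) with hμr | hμq
    · rw [sub_eq_zero.mp hμr, ofReal_re]
      exact hr0
    · exact re_neg_of_sq_add_mul_add_eq_zero hs ht hμq

noncomputable def lorenzJacobianCplus (σ β ρ : ℝ) : Matrix (Fin 3) (Fin 3) ℝ :=
  !![-σ, σ, 0;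
     1, -1, -Real.sqrt (β * (ρ - 1));
     Real.sqrt (β * (ρ - 1)), Real.sqrt (β * (ρ - 1)), -β]

theorem mem_spectrum_lorenzJacobianCplus_iff {σ β ρ : ℝ} (hβρ : 0 ≤ β * (ρ - 1)) (μ : ℂ) :
    μ ∈ spectrum ℂ ((lorenzJacobianCplus σ β ρ).map ofReal) ↔
      μ ^ 3 + (σ + β + 1 : ℝ) * μ ^ 2 + (β * (σ + ρ) : ℝ) * μ + (2 * σ * β * (ρ - 1) : ℝ) = 0 := by
  have hw : (Real.sqrt (β * (ρ - 1)) : ℂ) ^ 2 = β * (ρ - 1) := by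
    exact_mod_cast Real.sq_sqrt hβρ
  rw [spectrum.mem_iff, Matrix.isUnit_iff_isUnit_det, isUnit_iff_ne_zero, not_not,
    Matrix.det_fin_three]
  simp only [lorenzJacobianCplus, Matrix.sub_apply, Matrix.algebraMap_matrix_apply,
    Matrix.map_apply, Matrix.of_apply, Matrix.cons_val', Matrix.cons_val_zero, Matrix.cons_val_one,
    Matrix.cons_val, Matrix.cons_val_fin_one, Fin.reduceEq, ↓reduceIte, Algebra.algebraMap_self,
    RingHom.id_apply]
  push_cast
  constructor <;> intro h
  · linear_combination h - (μ + 2 * σ) * hw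
  · linear_combination h + (μ + 2 * σ) * hw

/-- For `σ = 10`, `β = 8/3`, `ρ > 1`, all complex eigenvalues of the Jacobian of the Lorenz
field at `C₊` have negative real part if and only if `ρ < 470/19 ≈ 24.74`: the equilibria
`C₊`, `C₋` are linearly asymptotically stable exactly for `1 < ρ < ρ₂ = 470/19`. -/
theorem lorenz_Cplus_stability_threshold (σ β ρ : ℝ)
    (hσ : σ = 10) (hβ : β = 8/3) (hρ : 1 < ρ)
    (A : Matrix (Fin 3) (Fin 3) ℝ)
    (hA : A = !![-σ, σ, 0;
                 1, -1, -Real.sqrt (β * (ρ - 1));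
                 Real.sqrt (β * (ρ - 1)), Real.sqrt (β * (ρ - 1)), -β]) :
    (∀ μ ∈ spectrum ℂ (A.map (Complex.ofReal)), μ.re < 0) ↔ ρ < 470/19 := by
  change A = lorenzJacobianCplus σ β ρ at hA
  subst hA hσ hβ
  simp_rw [mem_spectrum_lorenzJacobianCplus_iff (by nlinarith : (0 : ℝ) ≤ 8 / 3 * (ρ - 1))]
  rw [cubic_routh_hurwitz (by norm_num) (by nlinarith)]
  constructor <;> intro h <;> linarith
end
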